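/- arXiv:2010.13207 — 4 statements merged into one kernel-verified Lean document; each statement's English description precedes it below -/
import Mathlib

section
/- For any nonnegative reals p_1 ≥ p_2 ≥ ... ≥ p_n and positive integer m ≥ i+2, let f(i) denote the minimum over all partitions of {1,...,n} into i lists of the sum over lists of Σ_k k·p_{σ(k)} where jobs in each list are counted with multiplier equal to their position from the end. Then f(i) - f(i+1) ≥ f(i+1) - f(i+2); i.e., the marginal decrease in optimal total completion time from adding one identical machine is nonincreasing in the number of machines. -/
open Finset

/-- Any `J` distinct slots with position ≥ 1 have position-sum at least `∑_{j<J} (j/i+1)`. -/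
lemma slot_sum_lb (i : ℕ) (hi : 1 ≤ i) :
    ∀ (J : ℕ) (T : Finset (Fin i × ℕ)), T.card = J → (∀ x ∈ T, 1 ≤ x.2) →
      ∑ j ∈ range J, (j / i + 1) ≤ ∑ x ∈ T, x.2 := by
  intro J
  induction J with
  | zero => simp
  | succ J ih =>
    intro T hcard hpos
    have hne : T.Nonempty := by rw [← Finset.card_pos, hcard]; omega
    obtain ⟨x, hx, hmax⟩ := T.exists_max_image Prod.snd hne
    have hsub : T ⊆ Finset.univ ×ˢ Finset.Icc 1 x.2 := by
      intro y hy
      simp only [Finset.mem_product, Finset.mem_univ, Finset.mem_Icc, true_and]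
      exact ⟨hpos y hy, hmax y hy⟩
    have hcb : J + 1 ≤ i * x.2 := by
      have := Finset.card_le_card hsub
      rw [hcard, Finset.card_product, Finset.card_univ, Fintype.card_fin, Nat.card_Icc,
        Nat.add_sub_cancel] at this
      exact this
    have hv : J / i + 1 ≤ x.2 := by
      have : J / i < x.2 := (Nat.div_lt_iff_lt_mul hi).2 (by nlinarith)
      omega
    have h1 : ∑ j ∈ range J, (j / i + 1) ≤ ∑ y ∈ T.erase x, y.2 :=
      ih _ (by rw [Finset.card_erase_of_mem hx, hcard, Nat.add_sub_cancel]) (fun y hy => hpos y (Finset.mem_of_mem_erase hy))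
    rw [Finset.sum_range_succ, ← Finset.add_sum_erase _ _ hx]
    omega

/-- Abel summation nonnegativity: if all prefix sums of `q` (up to `n`) are nonnegative
and `P` is antitone and nonnegative, then `∑ q j * P j ≥ 0`. -/
lemma abel_nonneg (n : ℕ) (q P : ℕ → ℝ)
    (hP0 : ∀ j, 0 ≤ P j) (hPmono : ∀ j k, j ≤ k → P k ≤ P j)
    (hQ : ∀ J, J ≤ n → 0 ≤ ∑ j ∈ range J, q j) :
    0 ≤ ∑ j ∈ range n, q j * P j := by
  rcases Nat.eq_zero_or_pos n with rfl | hn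
  · simp
  have hparts := Finset.sum_range_by_parts P q n
  simp only [smul_eq_mul] at hparts
  have h1 : 0 ≤ P (n - 1) * ∑ j ∈ range n, q j :=
    mul_nonneg (hP0 _) (hQ n le_rfl)
  have h2 : ∑ i ∈ range (n - 1), (P (i + 1) - P i) * ∑ j ∈ range (i + 1), q j ≤ 0 := by
    apply Finset.sum_nonpos
    intro i hi
    apply mul_nonpos_of_nonpos_of_nonneg
    · linarith [hPmono i (i + 1) (by omega)]
    · exact hQ (i + 1) (by rw [Finset.mem_range] at hi; omega)
  calc (0:ℝ) ≤ P (n-1) * ∑ j ∈ range n, q j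
      - ∑ i ∈ range (n - 1), (P (i + 1) - P i) * ∑ j ∈ range (i + 1), q j := by linarith
    _ = ∑ j ∈ range n, P j * q j := hparts.symm
    _ = ∑ j ∈ range n, q j * P j := by simp [mul_comm]

/-- `∑_{j<J} j/i = ∑_{t=1}^{J} (J - i*t)` (truncated subtraction). -/
lemma sum_div_eq (i J : ℕ) (hi : 1 ≤ i) :
    ∑ j ∈ range J, j / i = ∑ t ∈ Icc 1 J, (J - i * t) := by
  have key : ∀ j ∈ range J, j / i = ∑ t ∈ Icc 1 J, (if i * t ≤ j then 1 else 0) := by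
    intro j hj
    rw [Finset.mem_range] at hj
    rw [Finset.sum_boole, Nat.cast_id]
    have hfilt : (Icc 1 J).filter (fun t => i * t ≤ j) = Icc 1 (j / i) := by
      ext t
      simp only [Finset.mem_filter, Finset.mem_Icc]
      constructor
      · rintro ⟨⟨h1, h2⟩, h3⟩
        exact ⟨h1, (Nat.le_div_iff_mul_le hi).2 (by rwa [Nat.mul_comm] at h3)⟩
      · rintro ⟨h1, h2⟩
        have h3 : t * i ≤ j := (Nat.le_div_iff_mul_le hi).1 h2
        have h5 : j / i ≤ j := Nat.div_le_self _ _
        have h4 : t ≤ t * i := Nat.le_mul_of_pos_right t hi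
        exact ⟨⟨h1, by omega⟩, by rwa [Nat.mul_comm] at h3⟩
    rw [hfilt]
    simp [Nat.card_Icc]
  rw [Finset.sum_congr rfl key, Finset.sum_comm]
  apply Finset.sum_congr rfl
  intro t _
  rw [Finset.sum_boole, Nat.cast_id]
  have : (range J).filter (fun j => i * t ≤ j) = Ico (i * t) J := by
    ext j; simp only [Finset.mem_filter, Finset.mem_range, Finset.mem_Ico]; omega
  rw [this]
  simp [Nat.card_Ico]


/-- Optimal total completion time of scheduling `n` jobs with processing times `p`
on `i` identical machines: minimum over injective assignments of jobs to
(machine, position-from-end) slots (positions start at 1) of the weighted sum. -/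
noncomputable def optTCT (n : ℕ) (p : Fin n → ℝ) (i : ℕ) : ℝ :=
  sInf {c : ℝ | ∃ S : Fin n → Fin i × ℕ, Function.Injective S ∧
    (∀ j, 1 ≤ (S j).2) ∧ c = ∑ j, ((S j).2 : ℝ) * p j}

lemma optTCT_eq (n : ℕ) (p : Fin n → ℝ) (hmono : Antitone p) (hnn : ∀ j, 0 ≤ p j)
    (i : ℕ) (hi : 1 ≤ i) :
    optTCT n p i = ∑ j : Fin n, (((j : ℕ) / i + 1 : ℕ) : ℝ) * p j := by
  apply IsLeast.csInf_eq
  constructor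
  · refine ⟨fun j => (⟨(j : ℕ) % i, Nat.mod_lt _ hi⟩, (j : ℕ) / i + 1), ?_, fun j => Nat.le_add_left 1 _, rfl⟩
    intro j k h
    have h1 : (j : ℕ) % i = (k : ℕ) % i := congrArg (fun x => (x.1 : ℕ)) h
    have h2 : (j : ℕ) / i = (k : ℕ) / i := by
      have := congrArg (fun x => x.2) h; simpa using this
    have h3 := Nat.div_add_mod (j : ℕ) i
    have h4 := Nat.div_add_mod (k : ℕ) i
    have h5 : i * ((j : ℕ) / i) = i * ((k : ℕ) / i) := by rw [h2]
    exact Fin.ext (by omega)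
  · rintro c ⟨S, hinj, hpos, rfl⟩
    set P : ℕ → ℝ := fun j => if h : j < n then p ⟨j, h⟩ else 0 with hP
    set q : ℕ → ℝ := fun j =>
      if h : j < n then ((S ⟨j, h⟩).2 : ℝ) - (((j / i + 1 : ℕ)) : ℝ) else 0 with hq
    have hP0 : ∀ j, 0 ≤ P j := by
      intro j; rw [hP]; dsimp only; split
      · exact hnn _
      · exact le_refl 0
    have hPmono : ∀ j k, j ≤ k → P k ≤ P j := by
      intro j k hjk
      by_cases hk : k < n
      · have hj : j < n := lt_of_le_of_lt hjk hk
        rw [hP]; dsimp only; rw [dif_pos hk, dif_pos hj]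
        exact hmono (by exact_mod_cast hjk)
      · rw [hP]; dsimp only; rw [dif_neg hk]
        exact hP0 j
    have hQ : ∀ J, J ≤ n → 0 ≤ ∑ j ∈ range J, q j := by
      intro J hJ
      have e1 : ∑ j ∈ range J, q j =
          ∑ j : Fin J, (((S (Fin.castLE hJ j)).2 : ℝ) - (((j : ℕ) / i + 1 : ℕ) : ℝ)) := by
        rw [← Fin.sum_univ_eq_sum_range]
        refine Finset.sum_congr rfl fun j _ => ?_
        rw [hq]; dsimp only
        rw [dif_pos (lt_of_lt_of_le j.isLt hJ)]
        rfl
      have hnat : ∑ j ∈ range J, ((j : ℕ) / i + 1) ≤ ∑ j : Fin J, (S (Fin.castLE hJ j)).2 := by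
        have hinj' : Function.Injective (fun j : Fin J => S (Fin.castLE hJ j)) :=
          hinj.comp (Fin.castLE_injective hJ)
        have hcard : (Finset.univ.image (fun j : Fin J => S (Fin.castLE hJ j))).card = J := by
          rw [Finset.card_image_of_injective _ hinj', Finset.card_univ, Fintype.card_fin]
        have := slot_sum_lb i hi J _ hcard (by
          intro x hx
          rw [Finset.mem_image] at hx
          obtain ⟨j, _, rfl⟩ := hx
          exact hpos _)
        rwa [Finset.sum_image (fun a _ b _ h => hinj' h)] at this
      rw [e1, Finset.sum_sub_distrib]
      rw [sub_nonneg]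
      calc (∑ j : Fin J, (((j : ℕ) / i + 1 : ℕ) : ℝ))
          = ((∑ j ∈ range J, ((j : ℕ) / i + 1) : ℕ) : ℝ) := by
            rw [Nat.cast_sum, Fin.sum_univ_eq_sum_range (fun j => ((j / i + 1 : ℕ) : ℝ))]
        _ ≤ ((∑ j : Fin J, (S (Fin.castLE hJ j)).2 : ℕ) : ℝ) := by exact_mod_cast hnat
        _ = ∑ j : Fin J, ((S (Fin.castLE hJ j)).2 : ℝ) := by rw [Nat.cast_sum]
    have habel := abel_nonneg n q P hP0 hPmono hQ
    have e2 : ∑ j ∈ range n, q j * P j =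
        (∑ j, ((S j).2 : ℝ) * p j) - ∑ j : Fin n, (((j : ℕ) / i + 1 : ℕ) : ℝ) * p j := by
      rw [← Fin.sum_univ_eq_sum_range (fun j => q j * P j), ← Finset.sum_sub_distrib]
      refine Finset.sum_congr rfl fun j _ => ?_
      rw [hq, hP]; dsimp only
      rw [dif_pos j.isLt, dif_pos j.isLt, Fin.eta]
      ring
    rw [e2] at habel
    linarith


/-- The marginal decrease in optimal total completion time from adding one
identical machine is nonincreasing in the number of machines. -/
theorem stmt0 (n : ℕ) (p : Fin n → ℝ) (hmono : Antitone p) (hnn : ∀ j, 0 ≤ p j)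
    (i : ℕ) (hi : 1 ≤ i) :
    optTCT n p i - optTCT n p (i + 1) ≥ optTCT n p (i + 1) - optTCT n p (i + 2) := by
  rw [ge_iff_le, optTCT_eq n p hmono hnn i hi, optTCT_eq n p hmono hnn (i+1) (by omega),
    optTCT_eq n p hmono hnn (i+2) (by omega)]
  set P : ℕ → ℝ := fun j => if h : j < n then p ⟨j, h⟩ else 0 with hP
  set q : ℕ → ℝ := fun j =>
    ((j / i : ℕ) : ℝ) + ((j / (i+2) : ℕ) : ℝ) - 2 * ((j / (i+1) : ℕ) : ℝ) with hq
  have hP0 : ∀ j, 0 ≤ P j := by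
    intro j; rw [hP]; dsimp only; split
    · exact hnn _
    · exact le_refl 0
  have hPmono : ∀ j k, j ≤ k → P k ≤ P j := by
    intro j k hjk
    by_cases hk : k < n
    · have hj : j < n := lt_of_le_of_lt hjk hk
      rw [hP]; dsimp only; rw [dif_pos hk, dif_pos hj]
      exact hmono (by exact_mod_cast hjk)
    · rw [hP]; dsimp only; rw [dif_neg hk]
      exact hP0 j
  have hQ : ∀ J, J ≤ n → 0 ≤ ∑ j ∈ range J, q j := by
    intro J _
    have hnat : 2 * ∑ j ∈ range J, j / (i+1) ≤
        (∑ j ∈ range J, j / i) + ∑ j ∈ range J, j / (i+2) := by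
      rw [sum_div_eq i J hi, sum_div_eq (i+1) J (by omega), sum_div_eq (i+2) J (by omega),
        Finset.mul_sum, ← Finset.sum_add_distrib]
      apply Finset.sum_le_sum
      intro t _
      have h : i * t + (i+2) * t = 2 * ((i+1) * t) := by ring
      omega
    have e : ∑ j ∈ range J, q j =
        ((∑ j ∈ range J, j / i : ℕ) : ℝ) + ((∑ j ∈ range J, j / (i+2) : ℕ) : ℝ)
          - 2 * ((∑ j ∈ range J, j / (i+1) : ℕ) : ℝ) := by
      rw [hq]
      push_cast
      rw [Finset.sum_sub_distrib, Finset.sum_add_distrib, Finset.mul_sum]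
    rw [e]
    have hcast : 2 * ((∑ j ∈ range J, j / (i+1) : ℕ) : ℝ) ≤
        ((∑ j ∈ range J, j / i : ℕ) : ℝ) + ((∑ j ∈ range J, j / (i+2) : ℕ) : ℝ) := by
      exact_mod_cast hnat
    linarith
  have habel := abel_nonneg n q P hP0 hPmono hQ
  have e3 : ∑ j ∈ range n, q j * P j =
      (∑ j : Fin n, (((j : ℕ) / i + 1 : ℕ) : ℝ) * p j)
      + (∑ j : Fin n, (((j : ℕ) / (i+2) + 1 : ℕ) : ℝ) * p j)
      - 2 * (∑ j : Fin n, (((j : ℕ) / (i+1) + 1 : ℕ) : ℝ) * p j) := by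
    rw [← Fin.sum_univ_eq_sum_range (fun j => q j * P j), Finset.mul_sum,
      ← Finset.sum_add_distrib, ← Finset.sum_sub_distrib]
    refine Finset.sum_congr rfl fun j _ => ?_
    rw [hq, hP]; dsimp only; rw [dif_pos j.isLt, Fin.eta]
    push_cast
    ring
  rw [e3] at habel
  linarith
end

section
/- Let s_1, ..., s_m and l_1, ..., l_m be positive integers with Σ_i l_i = Σ_i s_i. Then Σ_{i=1}^m C(l_i+1, 2)/s_i ≥ Σ_{i=1}^m (s_i+1)/2, with equality if and only if l_i = s_i for all i. -/
lemma per_eq (a b : ℕ) (hb : 0 < b) :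
    ((a:ℝ) * ((a:ℝ) + 1) / 2) / (b:ℝ) - (((b:ℝ) + 1)/2 + ((a:ℝ) - (b:ℝ)))
      = ((((a:ℤ) - b) * (((a:ℤ) - b) + 1) : ℤ) : ℝ) / (2 * b) := by
  have hb' : (b:ℝ) ≠ 0 := by positivity
  push_cast
  field_simp
  ring

lemma int_key (d : ℤ) : 0 ≤ d * (d + 1) := by
  rcases le_or_gt 0 d with h | h
  · positivity
  · have h1 : d + 1 ≤ 0 := by omega
    nlinarith

lemma int_key_eq (d : ℤ) : d * (d + 1) = 0 ↔ d = 0 ∨ d = -1 := by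
  rw [mul_eq_zero]; omega

/-- If `Σ l_i = Σ s_i` for positive integers, then
`Σ C(l_i+1,2)/s_i ≥ Σ (s_i+1)/2`, with equality iff `l_i = s_i` for all `i`. -/
theorem stmt2 (m : ℕ) (s l : Fin m → ℕ) (hs : ∀ i, 0 < s i) (hl : ∀ i, 0 < l i)
    (hsum : ∑ i, l i = ∑ i, s i) :
    (∑ i, ((l i : ℝ) * ((l i : ℝ) + 1) / 2) / (s i : ℝ) ≥ ∑ i, ((s i : ℝ) + 1) / 2) ∧
    ((∑ i, ((l i : ℝ) * ((l i : ℝ) + 1) / 2) / (s i : ℝ) = ∑ i, ((s i : ℝ) + 1) / 2)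
      ↔ ∀ i, l i = s i) := by
  set G : Fin m → ℝ := fun i =>
    ((l i : ℝ) * ((l i : ℝ) + 1) / 2) / (s i : ℝ) - (((s i : ℝ) + 1)/2 + ((l i : ℝ) - (s i : ℝ)))
    with hGdef
  have hG : ∀ i, G i = ((((l i:ℤ) - s i) * (((l i:ℤ) - s i) + 1) : ℤ) : ℝ) / (2 * s i) :=
    fun i => per_eq (l i) (s i) (hs i)
  have hGnn : ∀ i, 0 ≤ G i := by
    intro i
    rw [hG i]
    have h1 : (0:ℝ) ≤ ((((l i:ℤ) - s i) * (((l i:ℤ) - s i) + 1) : ℤ) : ℝ) := by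
      exact_mod_cast int_key ((l i:ℤ) - s i)
    have h2 : (0:ℝ) < 2 * s i := by
      have := hs i; positivity
    positivity
  have hGzero : ∀ i, G i = 0 ↔ (l i = s i ∨ (l i : ℤ) = (s i : ℤ) - 1) := by
    intro i
    rw [hG i]
    have h2 : (0:ℝ) < 2 * s i := by have := hs i; positivity
    rw [div_eq_zero_iff]
    constructor
    · rintro (h | h)
      · have : ((l i:ℤ) - s i) * (((l i:ℤ) - s i) + 1) = 0 := by exact_mod_cast h
        rw [int_key_eq] at this
        rcases this with h' | h'
        · left; omega
        · right; omega
      · exact absurd h (ne_of_gt h2)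
    · rintro (h | h) <;> left
      · simp [h]
      · have : ((l i:ℤ) - s i) * (((l i:ℤ) - s i) + 1) = 0 := by rw [int_key_eq]; omega
        exact_mod_cast this
  have hsumls : ∑ i, ((l i : ℝ) - (s i : ℝ)) = 0 := by
    rw [Finset.sum_sub_distrib]
    have : (∑ i, (l i : ℝ)) = ∑ i, (s i : ℝ) := by exact_mod_cast hsum
    rw [this, sub_self]
  have hdiff : ∑ i, ((l i : ℝ) * ((l i : ℝ) + 1) / 2) / (s i : ℝ)
      - ∑ i, ((s i : ℝ) + 1) / 2 = ∑ i, G i := by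
    rw [← Finset.sum_sub_distrib]
    have : ∑ i, G i = ∑ i, (G i + ((l i : ℝ) - (s i : ℝ))) - ∑ i, ((l i:ℝ) - s i) := by
      rw [Finset.sum_add_distrib]; ring
    rw [this, hsumls, sub_zero]
    apply Finset.sum_congr rfl
    intro i _
    simp only [hGdef]; ring
  have hGsum : 0 ≤ ∑ i, G i := Finset.sum_nonneg fun i _ => hGnn i
  constructor
  · linarith [hdiff]
  · constructor
    · intro heq
      have hz : ∑ i, G i = 0 := by linarith [hdiff]
      have hall : ∀ i ∈ Finset.univ, G i = 0 :=
        (Finset.sum_eq_zero_iff_of_nonneg (fun i _ => hGnn i)).mp hz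
      -- each i: l i = s i or l i = s i - 1, i.e. l i ≤ s i
      have hle : ∀ i, l i ≤ s i := by
        intro i
        rcases (hGzero i).mp (hall i (Finset.mem_univ i)) with h | h
        · omega
        · omega
      intro i
      exact (Finset.sum_eq_sum_iff_of_le (fun i _ => hle i)).mp hsum i (Finset.mem_univ i)
    · intro h
      apply Finset.sum_congr rfl
      intro i _
      rw [h i]
      have hsi : (s i : ℝ) ≠ 0 := by have := hs i; positivity
      field_simp
end

section
/- Let J be a finite set of jobs with nonnegative processing requirements and let M = {m_1, ..., m_m} (m ≥ 3) be uniform machines with speeds s(m_1) = s(m_2) = 2 and s(m_i) = 2^{i-1} for 3 ≤ i ≤ m. Then the minimum total completion time of scheduling J on M is at least the minimum total completion time of scheduling J on a single machine of speed 2^m. -/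
/-!
A slot of the `m` machines (the `k`-th last position on machine `i`) is sent to a position
of the single machine of speed `2 ^ m`: position `2 ^ (m - 1) * (k - 1) + 1` for machine `0`
and `2 ^ (m - 1 - i) * (2 * k - 1) + 1` for machine `i ≥ 1`. Reading off the exponent of `2`
in the position minus one shows these positions are distinct, and each is at most
`k * 2 ^ m / speed i`. Moving every job to the image of its slot therefore gives a
single-machine schedule that is no more expensive.
-/

/-- Optimal total completion time of scheduling jobs `p` on `m` uniform machines
with speeds `speed`: minimum over injective assignments of jobs to
(machine, position-from-end) slots (positions start at 1). -/
noncomputable def optTCTQ (n m : ℕ) (p : Fin n → ℝ) (speed : Fin m → ℝ) : ℝ :=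
  sInf {c : ℝ | ∃ S : Fin n → Fin m × ℕ, Function.Injective S ∧
    (∀ j, 1 ≤ (S j).2) ∧ c = ∑ j, ((S j).2 : ℝ) * p j / speed (S j).1}

open Function

section Scheduling

variable {n m m' : ℕ} {p : Fin n → ℝ} {speed : Fin m → ℝ} {speed' : Fin m' → ℝ}

theorem optTCTQ_le_cost (hp : ∀ j, 0 ≤ p j) (hspeed : ∀ i, 0 ≤ speed i)
    {S : Fin n → Fin m × ℕ} (hS : Injective S) (hS1 : ∀ j, 1 ≤ (S j).2) :
    optTCTQ n m p speed ≤ ∑ j, ((S j).2 : ℝ) * p j / speed (S j).1 := by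
  refine csInf_le ⟨0, ?_⟩ ⟨S, hS, hS1, rfl⟩
  rintro _ ⟨T, -, -, rfl⟩
  exact Finset.sum_nonneg fun j _ => by have := hp j; have := hspeed (T j).1; positivity

theorem le_optTCTQ (hm : 0 < m) {c : ℝ}
    (h : ∀ S : Fin n → Fin m × ℕ, Injective S → (∀ j, 1 ≤ (S j).2) →
      c ≤ ∑ j, ((S j).2 : ℝ) * p j / speed (S j).1) :
    c ≤ optTCTQ n m p speed := by
  refine le_csInf ⟨_, fun j => (⟨0, hm⟩, (j : ℕ) + 1), ?_, fun _ => Nat.le_add_left 1 _, rfl⟩ ?_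
  · intro j j' hjj
    exact Fin.ext (by simpa using hjj)
  · rintro _ ⟨S, hS, hS1, rfl⟩
    exact h S hS hS1

theorem optTCTQ_le_of_slotMap (hp : ∀ j, 0 ≤ p j) (hspeed' : ∀ i, 0 ≤ speed' i) (hm : 0 < m)
    (f : Fin m × ℕ → Fin m' × ℕ) (hf_inj : Set.InjOn f {x | 1 ≤ x.2})
    (hf_maps : Set.MapsTo f {x | 1 ≤ x.2} {y | 1 ≤ y.2})
    (hf_cost : ∀ x : Fin m × ℕ, 1 ≤ x.2 → ((f x).2 : ℝ) / speed' (f x).1 ≤ x.2 / speed x.1) :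
    optTCTQ n m' p speed' ≤ optTCTQ n m p speed := by
  refine le_optTCTQ hm fun S hS hS1 => ?_
  calc optTCTQ n m' p speed'
      ≤ ∑ j, ((f (S j)).2 : ℝ) * p j / speed' (f (S j)).1 :=
        optTCTQ_le_cost hp hspeed' (fun j j' h => hS (hf_inj (hS1 j) (hS1 j') h))
          fun j => hf_maps (hS1 j)
    _ ≤ ∑ j, ((S j).2 : ℝ) * p j / speed (S j).1 := by
        refine Finset.sum_le_sum fun j _ => ?_
        rw [mul_div_right_comm, mul_div_right_comm]
        exact mul_le_mul_of_nonneg_right (hf_cost _ (hS1 j)) (hp j)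

end Scheduling

theorem two_pow_add_mul_ne_two_pow_mul_odd {e i : ℕ} (hi : i ≠ 0) (a b : ℕ) :
    2 ^ (e + i) * a ≠ 2 ^ e * (2 * b + 1) := by
  intro h
  rw [pow_add, mul_assoc] at h
  have h' : 2 ^ i * a = 2 * b + 1 := Nat.eq_of_mul_eq_mul_left (by positivity) h
  have : 2 ∣ 2 * b + 1 := h' ▸ (dvd_pow_self 2 hi).mul_right a
  omega

theorem two_pow_mul_odd_inj {e f a b : ℕ} (h : 2 ^ e * (2 * a + 1) = 2 ^ f * (2 * b + 1)) :
    e = f ∧ a = b := by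
  wlog hef : e ≤ f generalizing e f a b
  · exact (this h.symm (by omega)).imp Eq.symm Eq.symm
  obtain ⟨d, rfl⟩ := Nat.exists_eq_add_of_le hef
  rcases Nat.eq_zero_or_pos d with rfl | hd
  · exact ⟨rfl, by simpa using h⟩
  · exact absurd h.symm (two_pow_add_mul_ne_two_pow_mul_odd hd.ne' _ _)

def mergeSlot (m i k : ℕ) : ℕ :=
  if i = 0 then 2 ^ (m - 1) * (k - 1) + 1 else 2 ^ (m - 1 - i) * (2 * (k - 1) + 1) + 1

theorem one_le_mergeSlot (m i k : ℕ) : 1 ≤ mergeSlot m i k := by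
  unfold mergeSlot
  split <;> omega

theorem mergeSlot_inj {m i i' k k' : ℕ} (hi : i < m) (hi' : i' < m) (hk : 1 ≤ k) (hk' : 1 ≤ k')
    (h : mergeSlot m i k = mergeSlot m i' k') :
    i = i' ∧ k = k' := by
  obtain ⟨a, rfl⟩ := Nat.exists_eq_add_of_le' hk
  obtain ⟨b, rfl⟩ := Nat.exists_eq_add_of_le' hk'
  simp only [mergeSlot, Nat.add_sub_cancel] at h
  split_ifs at h with hi0 hi0' hi0' <;> replace h := Nat.add_right_cancel h
  · have : a = b := Nat.eq_of_mul_eq_mul_left (Nat.two_pow_pos _) h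
    omega
  · obtain ⟨e, he⟩ : ∃ e, m - 1 = e + i' := ⟨m - 1 - i', by omega⟩
    rw [he, Nat.add_sub_cancel] at h
    exact absurd h (two_pow_add_mul_ne_two_pow_mul_odd hi0' _ _)
  · obtain ⟨e, he⟩ : ∃ e, m - 1 = e + i := ⟨m - 1 - i, by omega⟩
    rw [he, Nat.add_sub_cancel] at h
    exact absurd h.symm (two_pow_add_mul_ne_two_pow_mul_odd hi0 _ _)
  · obtain ⟨he, hab⟩ := two_pow_mul_odd_inj h
    omega

theorem mergeSlot_mul_le {m i k : ℕ} (hi : i < m) (hk : 1 ≤ k) :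
    mergeSlot m i k * 2 ^ max i 1 ≤ k * 2 ^ m := by
  obtain ⟨a, rfl⟩ := Nat.exists_eq_add_of_le' hk
  rcases Nat.eq_zero_or_pos i with rfl | hi0
  · have h2m : 2 ^ m = 2 ^ (m - 1) * 2 := by rw [← pow_succ, Nat.sub_add_cancel hi]
    have := Nat.one_le_two_pow (n := m - 1)
    simp only [mergeSlot, if_true, Nat.add_sub_cancel, h2m, zero_le_one, max_eq_right, pow_one]
    nlinarith
  · have h2m : 2 ^ m = 2 ^ (m - 1 - i) * 2 ^ i * 2 := by
      rw [← pow_add, ← pow_succ]; congr 1; omega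
    have := Nat.one_le_two_pow (n := m - 1 - i)
    simp only [mergeSlot, hi0.ne', if_false, Nat.add_sub_cancel,
      max_eq_left (show 1 ≤ i from hi0), h2m]
    nlinarith [Nat.one_le_two_pow (n := i)]

/-- Machines of speeds 2, 2, 2^2, ..., 2^{m-1} cannot beat a single machine of
speed `2^m` for total completion time. -/
theorem stmt5 (n m : ℕ) (hm : 3 ≤ m) (p : Fin n → ℝ) (hp : ∀ j, 0 ≤ p j)
    (speed : Fin m → ℝ)
    (hs01 : ∀ i : Fin m, (i : ℕ) < 2 → speed i = 2)
    (hs : ∀ i : Fin m, 2 ≤ (i : ℕ) → speed i = 2 ^ (i : ℕ)) :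
    optTCTQ n m p speed ≥ optTCTQ n 1 p (fun _ => 2 ^ m) := by
  have hspeed (i : Fin m) : speed i = 2 ^ max (i : ℕ) 1 := by
    rcases lt_or_ge (i : ℕ) 2 with h | h
    · rw [hs01 i h, max_eq_right (by omega), pow_one]
    · rw [hs i h, max_eq_left (by omega)]
  refine optTCTQ_le_of_slotMap hp (fun _ => by positivity) (by omega)
    (fun x => (0, mergeSlot m x.1 x.2)) ?_ ?_ ?_
  · intro x hx y hy hxy
    obtain ⟨hi, hk⟩ := mergeSlot_inj x.1.isLt y.1.isLt hx hy (congrArg Prod.snd hxy)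
    exact Prod.ext (Fin.ext hi) hk
  · exact fun x _ => one_le_mergeSlot m x.1 x.2
  · intro x hx
    rw [hspeed, div_le_div_iff₀ (by positivity) (by positivity)]
    dsimp only
    exact_mod_cast mergeSlot_mul_le x.1.isLt hx
end

section
/- Let ε ∈ (0,1) and let c* : M → ℕ be an integer capacity function with c*(m) ≥ 1. Suppose a finite set J_i of n_i unit jobs is covered by a set M' of machines such that either (a) Σ_{m∈M'} c*(m) ≥ (1-ε)·n_i and c*(m) > 1/ε for all m ∈ M', or (b) Σ_{m∈M'} c*(m) ≥ n_i - 1/ε and c*(m) > 1/ε² for some m ∈ M'. Then with the scaled capacities c'(m) = ⌊c*(m)·(1/(1-ε) + ε)⌋ one has Σ_{m∈M'} c'(m) ≥ n_i. -/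
/-!
Write `κ = 1/(1-ε) + ε`. If `c > 1/ε`, the surplus `c ε > 1` pays for the floor, so
`⌊c κ⌋ > c/(1-ε)`; summing this over a relatively almost exact cover gives at least
`(Σ c)/(1-ε) ≥ n`. Since `κ ≥ 1 + ε`, flooring never loses capacity, and a machine with
`c > 1/ε²` gains more than `c ε - 1 > 1/ε - 1`; on an absolutely almost exact cover the
scaled sum therefore exceeds `n - 1`, and being an integer it is at least `n`.
-/

open Finset

noncomputable def scaledCapacity (ε : ℝ) (c : ℕ) : ℤ := ⌊(c : ℝ) * (1 / (1 - ε) + ε)⌋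

section

variable {ε : ℝ} {c : ℕ}

theorem div_one_sub_lt_scaledCapacity (hε0 : 0 < ε) (hc : 1 / ε < c) :
    (c : ℝ) / (1 - ε) < scaledCapacity ε c := by
  have hcε : 1 < (c : ℝ) * ε := by rwa [div_lt_iff₀ hε0] at hc
  calc (c : ℝ) / (1 - ε) < (c : ℝ) * (1 / (1 - ε) + ε) - 1 := by
        rw [mul_add, mul_one_div]; linarith
    _ < scaledCapacity ε c := Int.sub_one_lt_floor _

theorem le_scaledCapacity (hε0 : 0 ≤ ε) (hε1 : ε < 1) : (c : ℤ) ≤ scaledCapacity ε c := by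
  rw [scaledCapacity, Int.le_floor, Int.cast_natCast]
  exact le_mul_of_one_le_right c.cast_nonneg
    (by linarith [one_le_one_div (a := 1 - ε) (by linarith) (by linarith)])

theorem add_one_div_sub_one_lt_scaledCapacity (hε0 : 0 < ε) (hε1 : ε < 1)
    (hc : 1 / ε ^ 2 < c) : (c : ℝ) + 1 / ε - 1 < scaledCapacity ε c := by
  have hcε : 1 / ε < (c : ℝ) * ε := by
    rw [div_lt_iff₀ (by positivity)] at hc
    rw [div_lt_iff₀ hε0]; linarith
  calc (c : ℝ) + 1 / ε - 1 < (c : ℝ) * (1 + ε) - 1 := by linarith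
    _ ≤ (c : ℝ) * (1 / (1 - ε) + ε) - 1 := by
        gcongr; exact one_le_one_div (by linarith) (by linarith)
    _ < scaledCapacity ε c := Int.sub_one_lt_floor _

end

section

variable {ι : Type*} {ε : ℝ} {cap : ι → ℕ} {n : ℕ} {s : Finset ι}

theorem le_sum_scaledCapacity_of_relative (hε0 : 0 < ε) (hε1 : ε < 1)
    (hsum : (1 - ε) * (n : ℝ) ≤ ∑ m ∈ s, (cap m : ℝ)) (hbig : ∀ m ∈ s, 1 / ε < (cap m : ℝ)) :
    (n : ℝ) ≤ ∑ m ∈ s, (scaledCapacity ε (cap m) : ℝ) :=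
  calc (n : ℝ) ≤ (∑ m ∈ s, (cap m : ℝ)) / (1 - ε) := by
        rw [le_div_iff₀ (by linarith)]; linarith
    _ = ∑ m ∈ s, (cap m : ℝ) / (1 - ε) := sum_div ..
    _ ≤ ∑ m ∈ s, (scaledCapacity ε (cap m) : ℝ) :=
        sum_le_sum fun m hm => (div_one_sub_lt_scaledCapacity hε0 (hbig m hm)).le

theorem le_sum_scaledCapacity_of_absolute (hε0 : 0 < ε) (hε1 : ε < 1)
    (hsum : (n : ℝ) - 1 / ε ≤ ∑ m ∈ s, (cap m : ℝ)) {m₀ : ι} (hm₀ : m₀ ∈ s)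
    (hbig : 1 / ε ^ 2 < (cap m₀ : ℝ)) :
    (n : ℝ) ≤ ∑ m ∈ s, (scaledCapacity ε (cap m) : ℝ) := by
  have hgain₀ : 1 / ε - 1 < (scaledCapacity ε (cap m₀) : ℝ) - cap m₀ := by
    linarith [add_one_div_sub_one_lt_scaledCapacity hε0 hε1 hbig]
  have hgain : 1 / ε - 1 < ∑ m ∈ s, ((scaledCapacity ε (cap m) : ℝ) - cap m) :=
    hgain₀.trans_le <| single_le_sum (f := fun m => (scaledCapacity ε (cap m) : ℝ) - cap m)
      (fun m _ => sub_nonneg.mpr (by exact_mod_cast le_scaledCapacity hε0.le hε1)) hm₀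
  rw [sum_sub_distrib] at hgain
  have hint : (((n : ℤ) - 1 : ℤ) : ℝ) < ((∑ m ∈ s, scaledCapacity ε (cap m) : ℤ) : ℝ) := by
    push_cast; linarith
  exact_mod_cast Int.sub_one_lt_iff.mp (Int.cast_lt.mp hint)

end

theorem stmt7_general (ε : ℝ) (hε0 : 0 < ε) (hε1 : ε < 1)
    (M : Type*)
    (cstar : M → ℕ) (ni : ℕ) (M' : Finset M)
    (hcov :
      ((1 - ε) * (ni : ℝ) ≤ ∑ m ∈ M', (cstar m : ℝ) ∧
        ∀ m ∈ M', (1 : ℝ) / ε < (cstar m : ℝ)) ∨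
      ((ni : ℝ) - 1 / ε ≤ ∑ m ∈ M', (cstar m : ℝ) ∧
        ∃ m ∈ M', (1 : ℝ) / ε ^ 2 < (cstar m : ℝ))) :
    (ni : ℝ) ≤ ∑ m ∈ M', ((⌊(cstar m : ℝ) * (1 / (1 - ε) + ε)⌋ : ℤ) : ℝ) := by
  rcases hcov with ⟨hsum, hbig⟩ | ⟨hsum, m₀, hm₀, hbig⟩
  · exact le_sum_scaledCapacity_of_relative hε0 hε1 hsum hbig
  · exact le_sum_scaledCapacity_of_absolute hε0 hε1 hsum hm₀ hbig

/-- A relatively or absolutely almost exact cover becomes an exact cover after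
scaling the capacities by `1/(1-ε) + ε` and flooring. -/
theorem stmt7 (ε : ℝ) (hε0 : 0 < ε) (hε1 : ε < 1)
    (M : Type*) [Fintype M] [DecidableEq M]
    (cstar : M → ℕ) (hc : ∀ m, 1 ≤ cstar m) (ni : ℕ) (M' : Finset M)
    (hcov :
      ((1 - ε) * (ni : ℝ) ≤ ∑ m ∈ M', (cstar m : ℝ) ∧
        ∀ m ∈ M', (1 : ℝ) / ε < (cstar m : ℝ)) ∨
      ((ni : ℝ) - 1 / ε ≤ ∑ m ∈ M', (cstar m : ℝ) ∧
        ∃ m ∈ M', (1 : ℝ) / ε ^ 2 < (cstar m : ℝ))) :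
    (ni : ℝ) ≤ ∑ m ∈ M', ((⌊(cstar m : ℝ) * (1 / (1 - ε) + ε)⌋ : ℤ) : ℝ) :=
  stmt7_general ε hε0 hε1 M cstar ni M' hcov
end
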